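/- Let ħ, m, c be real numbers, let ψ : Fin 4 → ℂ and let v : Fin 4 → Fin 4 → ℂ (where v q b represents the covariant derivative ∇_q ψ^b, so that ∇_q of the conjugate spinor is conj(v q ·)). Then the complex number L = i·ħ · Σ_{a,ā,b,p,q ∈ Fin 4} D_{a ā} (m_p)^a_b η^{pq} · (conj(ψ ā) · v q b − ψ b · conj(v q ā))/2 − m·c · Σ_{a,ā ∈ Fin 4} D_{a ā} · conj(ψ ā) · ψ a satisfies conj(L) = L, i.e. the Lagrangian density of the Dirac field is a real-valued scalar. -/
import Mathlib


open Matrix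

/-- The Minkowski matrix `η = diag(1, -1, -1, -1)`. -/
noncomputable def minkEta : Matrix (Fin 4) (Fin 4) ℝ :=
  !![1, 0, 0, 0; 0, -1, 0, 0; 0, 0, -1, 0; 0, 0, 0, -1]

/-- The Dirac form `D`, viewed as a complex `4 × 4` matrix. -/
noncomputable def diracD : Matrix (Fin 4) (Fin 4) ℂ :=
  !![0, 0, 1, 0; 0, 0, 0, 1; 1, 0, 0, 0; 0, 1, 0, 0]

/-- The four Dirac matrices `m₀, m₁, m₂, m₃`. -/
noncomputable def diracMat : Fin 4 → Matrix (Fin 4) (Fin 4) ℂ :=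
  ![!![0, 0, 1, 0; 0, 0, 0, 1; 1, 0, 0, 0; 0, 1, 0, 0],
    !![0, 0, 0, 1; 0, 0, 1, 0; 0, -1, 0, 0; -1, 0, 0, 0],
    !![0, 0, 0, -Complex.I; 0, 0, Complex.I, 0; 0, Complex.I, 0, 0; -Complex.I, 0, 0, 0],
    !![0, 0, 1, 0; 0, 0, 0, -1; -1, 0, 0, 0; 0, 1, 0, 0]]

/-- The value at a point of the Lagrangian density of a massive spin 1/2 particle, in a frame
pair where the metric components are `η` and the Dirac `γ`-field components are the matrices
`m_p`; `v q b` represents the covariant derivative `∇_q ψ^b`. -/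
noncomputable def diracLagrangian (hbar m c : ℝ) (ψ : Fin 4 → ℂ) (v : Fin 4 → Fin 4 → ℂ) : ℂ :=
  Complex.I * (hbar : ℂ) *
    ∑ a : Fin 4, ∑ abar : Fin 4, ∑ b : Fin 4, ∑ p : Fin 4, ∑ q : Fin 4,
      diracD a abar * diracMat p a b * ((minkEta p q : ℝ) : ℂ) *
        (((starRingEnd ℂ) (ψ abar) * v q b - ψ b * (starRingEnd ℂ) (v q abar)) / 2)
  - (m : ℂ) * (c : ℂ) *
    ∑ a : Fin 4, ∑ abar : Fin 4, diracD a abar * (starRingEnd ℂ) (ψ abar) * ψ a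

set_option maxHeartbeats 4000000 in
/-- The Lagrangian density of the Dirac field is a real-valued scalar:
`conj L = L`. -/
theorem dirac_lagrangian_real (hbar m c : ℝ) (ψ : Fin 4 → ℂ) (v : Fin 4 → Fin 4 → ℂ) :
    (starRingEnd ℂ) (diracLagrangian hbar m c ψ v) = diracLagrangian hbar m c ψ v := by
  unfold diracLagrangian diracD diracMat minkEta
  simp [Fin.sum_univ_four, Function.comp_apply, Matrix.cons_val_succ, Matrix.cons_val_zero, Matrix.cons_val_one, Matrix.head_cons,
    Matrix.cons_val', Matrix.empty_val', Matrix.cons_val_fin_one, Matrix.head_fin_const,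
    Matrix.cons_val_two, Matrix.cons_val_three, Matrix.tail_cons, Matrix.of_apply, Matrix.vecHead, Matrix.vecTail, zero_mul, mul_zero, one_mul,
    mul_one, add_zero, zero_add, neg_mul, mul_neg, neg_neg, Complex.ofReal_one,
    Complex.ofReal_neg, Complex.ofReal_zero]
  simp only [map_ofNat]
  ring
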